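/- arXiv:math/9408203 — 6 statements merged into one kernel-verified Lean document; each statement's English description precedes it below -/
import Mathlib

section
/- If f : X → Y is a monotone continuous surjection between compact Hausdorff spaces, X is a generalized arc with non-separating points a and b, and Y is nondegenerate (has at least two points), then f(a) ≠ f(b). -/
open Set

/-- If `B` is a nonempty open set whose boundary is contained in the single point `v ∉ B`,
then the complement of `B` is preconnected. -/
lemma arc_auxA {X : Type*} [TopologicalSpace X] [T1Space X] [ConnectedSpace X]
    {B : Set X} {v : X} (hBo : IsOpen B) (hvB : v ∉ B) (hcl : closure B ⊆ B ∪ {v}) :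
    IsPreconnected (Bᶜ : Set X) := by
  have hBvcl : IsClosed (B ∪ {v}) := by
    rw [← closure_eq_iff_isClosed]
    refine subset_antisymm ?_ subset_closure
    rw [closure_union, closure_singleton]
    exact union_subset hcl subset_union_right
  have key : ∀ u w : Set X, IsOpen u → IsOpen w → Bᶜ ⊆ u ∪ w →
      Bᶜ ∩ (u ∩ w) = ∅ → v ∈ u → Bᶜ ∩ w = ∅ := by
    intro u w hu hw hcov hemp hvu
    set Q : Set X := Bᶜ ∩ w with hQ
    have hvQ : v ∉ Q := by
      intro hvQ
      have : v ∈ Bᶜ ∩ (u ∩ w) := ⟨hvQ.1, hvu, hvQ.2⟩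
      rw [hemp] at this; exact this
    have hQeq2 : Q = (B ∪ {v})ᶜ ∩ w := by
      ext p
      constructor
      · rintro ⟨hp1, hp2⟩
        refine ⟨?_, hp2⟩
        rintro (hpB | hpv)
        · exact hp1 hpB
        · rw [mem_singleton_iff] at hpv; subst hpv; exact hvQ ⟨hp1, hp2⟩
      · rintro ⟨hp1, hp2⟩
        exact ⟨fun hpB => hp1 (Or.inl hpB), hp2⟩
    have hQopen : IsOpen Q := by
      rw [hQeq2]; exact hBvcl.isOpen_compl.inter hw
    have hQclosed : IsClosed Q := by
      have hQeq : Q = Bᶜ ∩ uᶜ := by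
        ext p
        constructor
        · rintro ⟨hp1, hp2⟩
          refine ⟨hp1, fun hpu => ?_⟩
          have : p ∈ Bᶜ ∩ (u ∩ w) := ⟨hp1, hpu, hp2⟩
          rw [hemp] at this; exact this
        · rintro ⟨hp1, hp2⟩
          rcases hcov hp1 with h | h
          · exact absurd h hp2
          · exact ⟨hp1, h⟩
      rw [hQeq]; exact hBo.isClosed_compl.inter (isClosed_compl_iff.mpr hu)
    rcases isClopen_iff.mp ⟨hQclosed, hQopen⟩ with h | h
    · exact h
    · exact absurd (h ▸ mem_univ v : v ∈ Q) hvQ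
  intro u w hu hw hcov ⟨p, hpB, hpu⟩ ⟨q, hqB, hqw⟩
  by_contra hemp
  rw [Set.not_nonempty_iff_eq_empty] at hemp
  rcases hcov (hvB : v ∈ Bᶜ) with hvu | hvw
  · have := key u w hu hw hcov hemp hvu
    have : q ∈ (∅ : Set X) := this ▸ ⟨hqB, hqw⟩
    exact this
  · have h3' : Bᶜ ∩ (w ∩ u) = ∅ := by rwa [inter_comm w u]
    have := key w u hw hu (union_comm u w ▸ hcov) h3' hvw
    have : p ∈ (∅ : Set X) := this ▸ ⟨hpB, hpu⟩
    exact this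

/-- In a space with exactly two non-cut points `a`, `b`: given a preconnected set `W`
containing `a` and `b` and a point `z ∉ W`, there is a nonempty open set `B` with
boundary in `{z}`, disjoint (together with `z`) from `W`. -/
lemma arc_auxB {X : Type*} [TopologicalSpace X] [T1Space X] {a b : X}
    (htwo : ∀ x : X, IsPreconnected ({x}ᶜ : Set X) ↔ (x = a ∨ x = b))
    {W : Set X} (hW : IsPreconnected W) (haW : a ∈ W) (hbW : b ∈ W)
    {z : X} (hz : z ∉ W) :
    ∃ B : Set X, B.Nonempty ∧ IsOpen B ∧ z ∉ B ∧ closure B ⊆ B ∪ {z} ∧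
      (B ∪ {z}) ∩ W = ∅ := by
  have hza : z ≠ a := fun h => hz (h ▸ haW)
  have hzb : z ≠ b := fun h => hz (h ▸ hbW)
  have hnp : ¬ IsPreconnected ({z}ᶜ : Set X) := by
    rw [htwo z]; rintro (h | h) <;> [exact hza h; exact hzb h]
  rw [IsPreconnected] at hnp
  push_neg at hnp
  obtain ⟨u, w, hu, hw, hcov, h1, h2, h3⟩ := hnp
  have hWz : W ⊆ ({z}ᶜ : Set X) := fun p hp hpz =>
    hz (by rw [mem_singleton_iff] at hpz; exact hpz ▸ hp)
  have key : ∀ u w : Set X, IsOpen u → IsOpen w → ({z}ᶜ : Set X) ⊆ u ∪ w →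
      (({z}ᶜ : Set X) ∩ w).Nonempty → ({z}ᶜ : Set X) ∩ (u ∩ w) = ∅ → W ⊆ u →
      ∃ B : Set X, B.Nonempty ∧ IsOpen B ∧ z ∉ B ∧ closure B ⊆ B ∪ {z} ∧
        (B ∪ {z}) ∩ W = ∅ := by
    intro u w hu hw hcov h2 h3 hWu
    refine ⟨{z}ᶜ ∩ w, h2, isOpen_compl_singleton.inter hw, fun h => h.1 rfl, ?_, ?_⟩
    · have hsub : ({z}ᶜ : Set X) ∩ w ⊆ ({z}ᶜ ∩ u)ᶜ := by
        intro p hp hpu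
        have : p ∈ ({z}ᶜ : Set X) ∩ (u ∩ w) := ⟨hp.1, hpu.2, hp.2⟩
        rw [h3] at this; exact this
      have hC : IsClosed (({z}ᶜ ∩ u : Set X)ᶜ) :=
        (isOpen_compl_singleton.inter hu).isClosed_compl
      refine (hC.closure_subset_iff.mpr hsub).trans ?_
      intro p hp
      by_cases hpz : p = z
      · exact Or.inr (by simp [hpz])
      · have hp1 : p ∈ ({z}ᶜ : Set X) := hpz
        have hpu : p ∉ u := fun h => hp ⟨hp1, h⟩
        rcases hcov hp1 with h | h
        · exact absurd h hpu
        · exact Or.inl ⟨hp1, h⟩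
    · apply eq_empty_iff_forall_notMem.mpr
      rintro p ⟨hp1 | hp1, hp2⟩
      · have : p ∈ ({z}ᶜ : Set X) ∩ (u ∩ w) := ⟨hp1.1, hWu hp2, hp1.2⟩
        rw [h3] at this; exact this
      · rw [mem_singleton_iff] at hp1; exact hz (hp1 ▸ hp2)
  have hWuw : W ⊆ u ∪ w := hWz.trans hcov
  have hWone : W ⊆ u ∨ W ⊆ w := by
    by_contra h
    push_neg at h
    obtain ⟨hnu, hnw⟩ := h
    obtain ⟨p, hpW, hpu⟩ := not_subset.mp hnu
    obtain ⟨q, hqW, hqw⟩ := not_subset.mp hnw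
    have hpw : p ∈ w := (hWuw hpW).resolve_left hpu
    have hqu : q ∈ u := (hWuw hqW).resolve_right hqw
    obtain ⟨r, hrW, hruw⟩ := hW u w hu hw hWuw ⟨q, hqW, hqu⟩ ⟨p, hpW, hpw⟩
    have : r ∈ ({z}ᶜ : Set X) ∩ (u ∩ w) := ⟨hWz hrW, hruw⟩
    rw [h3] at this; exact this
  rcases hWone with hWu | hWw
  · exact key u w hu hw hcov h2 h3 hWu
  · exact key w u hw hu (by rwa [union_comm]) h1 (by rwa [inter_comm w u]) hWw

/-- In a space with exactly two non-cut points `a`, `b`, there is no nonempty open set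
avoiding `a` and `b` whose boundary is a single point. -/
lemma arc_auxC {X : Type*} [TopologicalSpace X] [CompactSpace X] [T2Space X]
    [ConnectedSpace X] {a b : X}
    (htwo : ∀ x : X, IsPreconnected ({x}ᶜ : Set X) ↔ (x = a ∨ x = b))
    {B₀ : Set X} (h0ne : B₀.Nonempty) (h0o : IsOpen B₀) (h0a : a ∉ B₀) (h0b : b ∉ B₀)
    (v₀ : X) (h0v : v₀ ∉ B₀) (h0cl : closure B₀ ⊆ B₀ ∪ {v₀}) : False := by
  set Good : Set X → Prop := fun B =>
    B.Nonempty ∧ IsOpen B ∧ a ∉ B ∧ b ∉ B ∧ ∃ v, v ∉ B ∧ closure B ⊆ B ∪ {v} with hGood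
  set S := {B : Set X // Good B} with hS
  set r : S → S → Prop := fun B C => C.1 = B.1 ∨ closure C.1 ⊆ B.1 with hr
  have htrans : ∀ {B C D : S}, r B C → r C D → r B D := by
    rintro B C D (h1 | h1) (h2 | h2)
    · exact Or.inl (h2.trans h1)
    · exact Or.inr (h1 ▸ h2)
    · exact Or.inr (by rw [h2]; exact h1)
    · exact Or.inr ((h2.trans subset_closure).trans h1)
  -- the stepping lemma: from any Good set we can produce a strictly smaller one
  have hstep : ∀ m : S, ∃ D : S, r m D ∧ ¬ r D m := by
    intro m
    obtain ⟨hmne, hmo, hma, hmb, v, hvm, hvcl⟩ := m.2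
    obtain ⟨z, hzm⟩ := hmne
    have hWp : IsPreconnected ((m.1)ᶜ : Set X) := arc_auxA hmo hvm hvcl
    have hzW : z ∉ ((m.1)ᶜ : Set X) := fun h => h hzm
    obtain ⟨D, hDne, hDo, hzD, hDcl, hDdisj⟩ :=
      arc_auxB htwo hWp (hma : a ∈ (m.1)ᶜ) (hmb : b ∈ (m.1)ᶜ) hzW
    have hDm : D ∪ {z} ⊆ m.1 := by
      intro p hp
      by_contra hpm
      have : p ∈ (D ∪ {z}) ∩ (m.1)ᶜ := ⟨hp, hpm⟩
      rw [hDdisj] at this; exact this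
    have hDa : a ∉ D := by
      intro h
      have : a ∈ (D ∪ {z}) ∩ (m.1)ᶜ := ⟨Or.inl h, hma⟩
      rw [hDdisj] at this; exact this
    have hDb : b ∉ D := by
      intro h
      have : b ∈ (D ∪ {z}) ∩ (m.1)ᶜ := ⟨Or.inl h, hmb⟩
      rw [hDdisj] at this; exact this
    refine ⟨⟨D, hDne, hDo, hDa, hDb, z, hzD, hDcl⟩, ?_, ?_⟩
    · exact Or.inr (hDcl.trans hDm)
    · rintro (h | h)
      · have h' : m.1 = D := h
        exact hzD (h' ▸ hzm)
      · have h' : closure m.1 ⊆ D := h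
        exact hzD (h' (subset_closure hzm))
  have hchains : ∀ c : Set S, IsChain r c → ∃ ub, ∀ B ∈ c, r B ub := by
    intro c hc
    by_cases hcne : c.Nonempty
    swap
    · exact ⟨⟨B₀, h0ne, h0o, h0a, h0b, v₀, h0v, h0cl⟩,
        fun B hB => absurd ⟨B, hB⟩ hcne⟩
    · haveI : Nonempty c := hcne.to_subtype
      set Z : c → Set X := fun B => closure B.1.1 with hZ
      have hZd : Directed (· ⊇ ·) Z := by
        intro i j
        rcases eq_or_ne i.1 j.1 with h | h
        · exact ⟨i, subset_refl _, by simp only [hZ]; rw [h]⟩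
        · rcases hc i.2 j.2 h with hij | hij
          · rcases hij with he | hs
            · exact ⟨j, by simp only [hZ]; rw [he], subset_refl _⟩
            · exact ⟨j, (hs.trans subset_closure), subset_refl _⟩
          · rcases hij with he | hs
            · exact ⟨i, subset_refl _, by simp only [hZ]; rw [he]⟩
            · exact ⟨i, subset_refl _, (hs.trans subset_closure)⟩
      have hZne : ∀ i : c, (Z i).Nonempty := fun i => i.1.2.1.mono subset_closure
      have hZcl : ∀ i : c, IsClosed (Z i) := fun _ => isClosed_closure
      have hZcp : ∀ i : c, IsCompact (Z i) := fun i => (hZcl i).isCompact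
      obtain ⟨z, hzZ⟩ :=
        IsCompact.nonempty_iInter_of_directed_nonempty_isCompact_isClosed Z hZd hZne hZcp hZcl
      by_cases hall : ∀ B ∈ c, z ∈ B.1
      · set W : Set X := ⋃₀ ((fun B : S => (B.1)ᶜ) '' c) with hWdef
        have hWp : IsPreconnected W := by
          apply isPreconnected_sUnion a
          · rintro s ⟨B, _, rfl⟩; exact B.2.2.2.1
          · rintro s ⟨B, _, rfl⟩
            obtain ⟨_, hBo, _, _, v, hv, hvcl⟩ := B.2
            exact arc_auxA hBo hv hvcl
        obtain ⟨B₁, hB₁⟩ := hcne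
        have haW : a ∈ W := ⟨(B₁.1)ᶜ, ⟨B₁, hB₁, rfl⟩, B₁.2.2.2.1⟩
        have hbW : b ∈ W := ⟨(B₁.1)ᶜ, ⟨B₁, hB₁, rfl⟩, B₁.2.2.2.2.1⟩
        have hzW : z ∉ W := by
          rintro ⟨s, ⟨B, hB, rfl⟩, hzs⟩
          exact hzs (hall B hB)
        obtain ⟨D, hDne, hDo, hzD, hDcl, hDdisj⟩ := arc_auxB htwo hWp haW hbW hzW
        have hDW : ∀ B ∈ c, D ∪ {z} ⊆ B.1 := by
          intro B hB p hp
          by_contra hpB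
          have hpW : p ∈ W := ⟨(B.1)ᶜ, ⟨B, hB, rfl⟩, hpB⟩
          have : p ∈ (D ∪ {z}) ∩ W := ⟨hp, hpW⟩
          rw [hDdisj] at this; exact this
        have hDa : a ∉ D := by
          intro h
          have : a ∈ (D ∪ {z}) ∩ W := ⟨Or.inl h, haW⟩
          rw [hDdisj] at this; exact this
        have hDb : b ∉ D := by
          intro h
          have : b ∈ (D ∪ {z}) ∩ W := ⟨Or.inl h, hbW⟩
          rw [hDdisj] at this; exact this
        refine ⟨⟨D, hDne, hDo, hDa, hDb, z, hzD, hDcl⟩, fun B hB => ?_⟩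
        exact Or.inr (hDcl.trans (hDW B hB))
      · push_neg at hall
        obtain ⟨B₁, hB₁c, hzB₁⟩ := hall
        refine ⟨B₁, fun B hB => ?_⟩
        rcases eq_or_ne B B₁ with h | h
        · exact Or.inl (by rw [h])
        · rcases hc hB hB₁c (fun he => h (Subtype.ext (congrArg Subtype.val he))) with hr1 | hr1
          · exact hr1
          · rcases hr1 with he | hs
            · exact Or.inl he.symm
            · exact absurd (hs (Set.mem_iInter.mp hzZ ⟨B, hB⟩)) hzB₁
  obtain ⟨m, hm⟩ := exists_maximal_of_chains_bounded hchains @htrans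
  obtain ⟨D, hD1, hD2⟩ := hstep m
  exact hD2 (hm D hD1)

/-- If `f : X → Y` is a monotone continuous surjection between compact Hausdorff
spaces, `X` is a generalized arc with non-separating points `a` and `b`, and `Y`
has at least two points, then `f a ≠ f b`. -/
theorem stmt_1 (X Y : Type*) [TopologicalSpace X] [CompactSpace X] [T2Space X]
    [ConnectedSpace X] [TopologicalSpace Y] [CompactSpace Y] [T2Space Y]
    (f : X → Y) (hf : Continuous f) (hsurj : Function.Surjective f)
    (hmono : ∀ y : Y, IsConnected (f ⁻¹' {y}))
    (a b : X) (hab : a ≠ b)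
    (htwo : ∀ x : X, IsPreconnected ({x}ᶜ : Set X) ↔ (x = a ∨ x = b))
    (hY : ∃ y₁ y₂ : Y, y₁ ≠ y₂) :
    f a ≠ f b := by
  intro hfe
  obtain ⟨y₁, y₂, hy12⟩ := hY
  obtain ⟨y', hy'⟩ : ∃ y', y' ≠ f a := by
    rcases eq_or_ne y₁ (f a) with h | h
    · exact ⟨y₂, by rw [← h]; exact hy12.symm⟩
    · exact ⟨y₁, h⟩
  obtain ⟨x, hx⟩ := hsurj y'
  have hK : IsPreconnected (f ⁻¹' {f a}) := (hmono (f a)).isPreconnected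
  have haK : a ∈ f ⁻¹' {f a} := rfl
  have hbK : b ∈ f ⁻¹' {f a} := hfe.symm
  have hxK : x ∉ f ⁻¹' {f a} := by
    intro h
    exact hy' (hx ▸ h)
  obtain ⟨B, hBne, hBo, hzB, hBcl, hBdisj⟩ := arc_auxB htwo hK haK hbK hxK
  have hBa : a ∉ B := by
    intro h
    have : a ∈ (B ∪ {x}) ∩ f ⁻¹' {f a} := ⟨Or.inl h, haK⟩
    rw [hBdisj] at this; exact this
  have hBb : b ∉ B := by
    intro h
    have : b ∈ (B ∪ {x}) ∩ f ⁻¹' {f a} := ⟨Or.inl h, hbK⟩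
    rw [hBdisj] at this; exact this
  exact arc_auxC htwo hBne hBo hBa hBb x hzB hBcl
end

section
/- Let f : [0,1] → Y be a monotone continuous surjection onto a nondegenerate compact Hausdorff space. Then neither f(0) nor f(1) separates Y. -/
open unitInterval

lemma aux_image_compl {Y : Type*} (f : unitInterval → Y)
    (hsurj : Function.Surjective f) (p : unitInterval) :
    f '' (f ⁻¹' {f p})ᶜ = {f p}ᶜ := by
  ext y
  constructor
  · rintro ⟨t, ht, rfl⟩
    simpa using ht
  · intro hy
    obtain ⟨t, rfl⟩ := hsurj y
    exact ⟨t, by simpa using hy, rfl⟩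

lemma aux_preconn {Y : Type*} [TopologicalSpace Y]
    (f : unitInterval → Y) (hf : Continuous f) (hsurj : Function.Surjective f)
    (p : unitInterval) (hp : (p : ℝ) = 0 ∨ (p : ℝ) = 1)
    (hconn : IsConnected (f ⁻¹' {f p})) :
    IsPreconnected ({f p}ᶜ : Set Y) := by
  rw [← aux_image_compl f hsurj p]
  apply IsPreconnected.image _ f hf.continuousOn
  -- transfer to ℝ
  set S : Set unitInterval := f ⁻¹' {f p} with hS
  have hTconn : IsPreconnected ((Subtype.val : unitInterval → ℝ) '' S) :=
    hconn.isPreconnected.image _ continuous_subtype_val.continuousOn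
  have hTord : ((Subtype.val : unitInterval → ℝ) '' S).OrdConnected :=
    hTconn.ordConnected
  have hpT : (p : ℝ) ∈ (Subtype.val : unitInterval → ℝ) '' S :=
    ⟨p, by simp [hS], rfl⟩
  have hCord : ((Subtype.val : unitInterval → ℝ) '' Sᶜ).OrdConnected := by
    constructor
    rintro x ⟨a, ha, rfl⟩ y ⟨b, hb, rfl⟩ z hz
    have hzI : z ∈ unitInterval := ⟨le_trans a.2.1 hz.1, le_trans hz.2 b.2.2⟩
    refine ⟨⟨z, hzI⟩, ?_, rfl⟩
    intro hzS
    have hzT : (z : ℝ) ∈ (Subtype.val : unitInterval → ℝ) '' S :=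
      ⟨⟨z, hzI⟩, hzS, rfl⟩
    rcases hp with hp0 | hp1
    · have : (a : ℝ) ∈ (Subtype.val : unitInterval → ℝ) '' S :=
        hTord.out hpT hzT ⟨hp0.le.trans a.2.1, hz.1⟩
      obtain ⟨a', ha', haa⟩ := this
      have : a' = a := Subtype.ext haa
      exact ha (this ▸ ha')
    · have : (b : ℝ) ∈ (Subtype.val : unitInterval → ℝ) '' S :=
        hTord.out hzT hpT ⟨hz.2, b.2.2.trans hp1.ge⟩
      obtain ⟨b', hb', hbb⟩ := this
      have : b' = b := Subtype.ext hbb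
      exact hb (this ▸ hb')
  have hCpre : IsPreconnected ((Subtype.val : unitInterval → ℝ) '' Sᶜ) :=
    hCord.isPreconnected
  exact (Topology.IsInducing.subtypeVal.isPreconnected_image).mp hCpre

/-- If `f : [0,1] → Y` is a monotone continuous surjection onto a nondegenerate
compact Hausdorff space `Y`, then neither `f 0` nor `f 1` separates `Y`. -/
theorem stmt_3 (Y : Type*) [TopologicalSpace Y] [CompactSpace Y] [T2Space Y]
    (f : unitInterval → Y) (hf : Continuous f) (hsurj : Function.Surjective f)
    (hmono : ∀ y : Y, IsConnected (f ⁻¹' {y}))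
    (hY : ∃ y₁ y₂ : Y, y₁ ≠ y₂) :
    IsPreconnected ({f 0}ᶜ : Set Y) ∧ IsPreconnected ({f 1}ᶜ : Set Y) := by
  exact ⟨aux_preconn f hf hsurj 0 (Or.inl rfl) (hmono _),
    aux_preconn f hf hsurj 1 (Or.inr rfl) (hmono _)⟩
end

section
/- The continuous monotone image of an arc in a Hausdorff space is an arc: if f : [0,1] → Y is a monotone continuous surjection and Y is a nondegenerate compact Hausdorff space, then Y is homeomorphic to [0,1]. -/
/-! The fibers of `f` are disjoint closed subintervals of `[0,1]`, so choosing a point in each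
fiber induces a linear order on `Y` for which `f` is monotone. Between two fibers lies an open
gap, which meets every dense subset of `[0,1]`; hence the image of a countable dense set is
order-dense in `Y`, and Cantor's back-and-forth theorem yields a strictly monotone
`u : Y → [0,1]` with dense range. Then `u ∘ f` is monotone with dense range, hence continuous,
so `u` is continuous because `f` is a quotient map. Its image is compact and dense, so `u` is a
continuous bijection from a compact space onto `[0,1]`, i.e. a homeomorphism. -/

open Set Function unitInterval

def IsOrderDense {α : Type*} [LT α] (D : Set α) : Prop :=
  ∀ ⦃x y : α⦄, x < y → ∃ d ∈ D, x < d ∧ d < y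

section FiberOrder

variable {X Y : Type*} [LinearOrder X] [LinearOrder Y] {f : X → Y} {r : Y → X}

theorem monotone_of_ordConnected_fibers (hfr : LeftInverse f r) (hr : StrictMono r)
    (hfib : ∀ y, (f ⁻¹' {y}).OrdConnected) : Monotone f := by
  intro t t' htt'
  by_contra hlt
  have hr' : r (f t') < r (f t) := hr (not_le.1 hlt)
  rcases le_or_gt t' (r (f t)) with h | h
  · exact hlt ((hfib (f t)).out rfl (hfr (f t)) ⟨htt', h⟩).ge
  · exact hlt ((hfr (f t)).symm.trans ((hfib (f t')).out (hfr (f t')) rfl ⟨hr'.le, h.le⟩)).le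

theorem Monotone.preimage_Ioo_of_leftInverse (hf : Monotone f) (hfr : LeftInverse f r)
    (y y' : Y) : f ⁻¹' Ioo y y' = Ioo (r y) (r y') ∩ (f ⁻¹' {y, y'})ᶜ := by
  ext t
  simp only [mem_preimage, mem_Ioo, mem_inter_iff, mem_compl_iff, mem_insert_iff,
    mem_singleton_iff, not_or]
  constructor
  · rintro ⟨h, h'⟩
    refine ⟨⟨lt_of_not_ge fun ht => ?_, lt_of_not_ge fun ht => ?_⟩, h.ne', h'.ne⟩
    · exact (hfr y ▸ hf ht).not_gt h
    · exact (hfr y' ▸ hf ht).not_gt h'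
  · rintro ⟨⟨h, h'⟩, hy, hy'⟩
    exact ⟨(hfr y ▸ hf h.le).lt_of_ne' hy, (hfr y' ▸ hf h'.le).lt_of_ne hy'⟩

end FiberOrder

theorem Dense.isOrderDense_image_of_monotone {X Y : Type*} [ConditionallyCompleteLinearOrder X]
    [TopologicalSpace X] [OrderTopology X] [DenselyOrdered X] [LinearOrder Y]
    [TopologicalSpace Y] [T1Space Y] {f : X → Y} {r : Y → X} (hf : Continuous f)
    (hfm : Monotone f) (hfr : LeftInverse f r) {S : Set X} (hS : Dense S) :
    IsOrderDense (f '' S) := by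
  intro y y' h
  have hopen : IsOpen (f ⁻¹' Ioo y y') := by
    rw [hfm.preimage_Ioo_of_leftInverse hfr]
    exact isOpen_Ioo.inter ((toFinite _).isClosed.preimage hf).isOpen_compl
  have hne : (f ⁻¹' Ioo y y').Nonempty := by
    by_contra hempty
    have hle : r y ≤ r y' := le_of_not_gt fun h' => (hfr y' ▸ hfr y ▸ hfm h'.le).not_gt h
    have hcover : Icc (r y) (r y') ⊆ f ⁻¹' {y} ∪ f ⁻¹' {y'} := by
      intro t ht
      have h₁ : y ≤ f t := hfr y ▸ hfm ht.1
      have h₂ : f t ≤ y' := hfr y' ▸ hfm ht.2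
      by_contra hout
      simp only [mem_union, mem_preimage, mem_singleton_iff, not_or] at hout
      exact hempty ⟨t, h₁.lt_of_ne' hout.1, h₂.lt_of_ne hout.2⟩
    obtain ⟨t, -, hty, hty'⟩ := isPreconnected_closed_iff.1 isPreconnected_Icc _ _
      (isClosed_singleton.preimage hf) (isClosed_singleton.preimage hf) hcover
      ⟨r y, left_mem_Icc.2 hle, hfr y⟩ ⟨r y', right_mem_Icc.2 hle, hfr y'⟩
    exact h.ne (hty.symm.trans hty')
  obtain ⟨t, ⟨hyt, hty'⟩, htS⟩ := hS.inter_open_nonempty _ hopen hne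
  exact ⟨f t, mem_image_of_mem f htS, hyt, hty'⟩

section OrderEmbedding

variable {α : Type*} [LinearOrder α]

theorem IsOrderDense.exists_strictMono_extension {β : Type*} [CompleteLinearOrder β]
    {D : Set α} (hD : IsOrderDense D) {v : D → β} (hv : StrictMono v) :
    ∃ u : α → β, StrictMono u ∧ ∀ d : D, u d = v d := by
  refine ⟨fun x => ⨆ d : {d : D // (d : α) ≤ x}, v d, fun x y hxy => ?_, fun d => ?_⟩
  · obtain ⟨d₁, hd₁, hx₁, h₁y⟩ := hD hxy
    obtain ⟨d₂, hd₂, h₁₂, h₂y⟩ := hD h₁y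
    calc ⨆ d : {d : D // (d : α) ≤ x}, v d
        ≤ v ⟨d₁, hd₁⟩ := iSup_le fun d => hv.monotone (d.2.trans hx₁.le)
      _ < v ⟨d₂, hd₂⟩ := hv h₁₂
      _ ≤ ⨆ d : {d : D // (d : α) ≤ y}, v d := le_iSup_of_le ⟨⟨d₂, hd₂⟩, h₂y.le⟩ le_rfl
  · exact le_antisymm (iSup_le fun d' => hv.monotone d'.2) (le_iSup_of_le ⟨d, le_rfl⟩ le_rfl)

theorem exists_strictMono_unitInterval_denseRange [Countable α] [DenselyOrdered α]
    [NoMinOrder α] [NoMaxOrder α] [Nonempty α] :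
    ∃ v : α → I, StrictMono v ∧ DenseRange v := by
  obtain ⟨e⟩ := Order.iso_of_countable_dense α ℚ
  have hsigmoid : DenseRange sigmoid := by
    rw [DenseRange, range_sigmoid, ← dense_closure, closure_Ioo zero_ne_one]
    convert dense_univ
    exact eq_univ_of_forall fun t => ⟨nonneg', le_one'⟩
  refine ⟨sigmoid ∘ (↑) ∘ e, sigmoid_strictMono.comp (Rat.cast_strictMono.comp e.strictMono), ?_⟩
  have hcast : DenseRange (((↑) : ℚ → ℝ) ∘ e) := by
    rw [DenseRange, e.surjective.range_comp]
    exact Rat.denseRange_cast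
  exact hsigmoid.comp hcast continuous_sigmoid

theorem IsOrderDense.exists_strictMono_unitInterval [Nontrivial α] {D : Set α}
    (hDc : D.Countable) (hD : IsOrderDense D) :
    ∃ u : α → I, StrictMono u ∧ DenseRange u := by
  -- the back-and-forth theorem needs a subset without extrema
  set D' := {d ∈ D | ¬IsMin d ∧ ¬IsMax d}
  have hD' : IsOrderDense D' := fun x y hxy => by
    obtain ⟨d, hd, hxd, hdy⟩ := hD hxy
    exact ⟨d, ⟨hd, not_isMin_of_lt hxd, not_isMax_of_lt hdy⟩, hxd, hdy⟩
  have : Countable D' := (hDc.mono (sep_subset _ _)).to_subtype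
  have : DenselyOrdered D' := ⟨fun a b hab => by
    obtain ⟨d, hd, had, hdb⟩ := hD' hab
    exact ⟨⟨d, hd⟩, had, hdb⟩⟩
  have : NoMinOrder D' := ⟨fun a => by
    obtain ⟨x, hx⟩ := not_isMin_iff.1 a.2.2.1
    obtain ⟨d, hd, hxd, hda⟩ := hD' hx
    exact ⟨⟨d, hd⟩, hda⟩⟩
  have : NoMaxOrder D' := ⟨fun a => by
    obtain ⟨x, hx⟩ := not_isMax_iff.1 a.2.2.2
    obtain ⟨d, hd, had, hdx⟩ := hD' hx
    exact ⟨⟨d, hd⟩, had⟩⟩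
  have : Nonempty D' := by
    obtain ⟨x, y, hxy⟩ := exists_pair_lt α
    obtain ⟨d, hd, -⟩ := hD' hxy
    exact ⟨⟨d, hd⟩⟩
  obtain ⟨v, hv, hvd⟩ := exists_strictMono_unitInterval_denseRange (α := D')
  obtain ⟨u, hu, huv⟩ := hD'.exists_strictMono_extension hv
  refine ⟨u, hu, hvd.mono ?_⟩
  rintro _ ⟨d, rfl⟩
  exact ⟨d, huv d⟩

end OrderEmbedding

theorem stmt_4_general (Y : Type*) [TopologicalSpace Y] [T2Space Y]
    (f : unitInterval → Y) (hf : Continuous f) (hsurj : Function.Surjective f)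
    (hmono : ∀ y : Y, IsConnected (f ⁻¹' {y}))
    (hY : ∃ y₁ y₂ : Y, y₁ ≠ y₂) :
    Nonempty (Y ≃ₜ unitInterval) := by
  have : CompactSpace Y := hsurj.compactSpace hf
  have : Nontrivial Y := let ⟨y₁, y₂, h⟩ := hY; ⟨y₁, y₂, h⟩
  let : LinearOrder Y := LinearOrder.lift' (surjInv hsurj) (injective_surjInv hsurj)
  have hfr : LeftInverse f (surjInv hsurj) := rightInverse_surjInv hsurj
  have hfm : Monotone f := monotone_of_ordConnected_fibers hfr (fun _ _ h => h)
    fun y => (hmono y).isPreconnected.ordConnected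
  obtain ⟨S, hSc, hSd⟩ := TopologicalSpace.exists_countable_dense I
  obtain ⟨u, hu, hud⟩ :=
    (hSd.isOrderDense_image_of_monotone hf hfm hfr).exists_strictMono_unitInterval (hSc.image f)
  have hudf : DenseRange (u ∘ f) := by rwa [DenseRange, hsurj.range_comp]
  have hu_cont : Continuous u :=
    (Topology.IsQuotientMap.of_surjective_continuous hsurj hf).continuous_iff.2
      ((hu.monotone.comp hfm).continuous_of_denseRange hudf)
  have hu_surj : Surjective u := by
    rw [← range_eq_univ, ← (isCompact_range hu_cont).isClosed.closure_eq, hud.closure_range]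
  exact ⟨hu_cont.homeoOfEquivCompactToT2 (f := Equiv.ofBijective u ⟨hu.injective, hu_surj⟩)⟩

/-- The monotone continuous image of an arc in a nondegenerate compact Hausdorff
space is an arc: `Y` is homeomorphic to `[0,1]`. -/
theorem stmt_4 (Y : Type*) [TopologicalSpace Y] [CompactSpace Y] [T2Space Y]
    (f : unitInterval → Y) (hf : Continuous f) (hsurj : Function.Surjective f)
    (hmono : ∀ y : Y, IsConnected (f ⁻¹' {y}))
    (hY : ∃ y₁ y₂ : Y, y₁ ≠ y₂) :
    Nonempty (Y ≃ₜ unitInterval) :=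
  stmt_4_general Y f hf hsurj hmono hY
end

section
/- Any two arcs are homeomorphic: any metrizable continuum with exactly two non-separating points is homeomorphic to the closed unit interval [0,1]. -/
/-!
Removing a cut point `x` splits the arc into two open pieces. By a Zorn/compactness argument every
piece contains a non-separating point, so one piece contains `a` and the other `b`. Declaring
`x < y` when `x` lies on the `a`-side of `y` gives a linear order in which open rays are open.
A countable dense subset of the arc is then order-isomorphic to the rationals in `(0, 1)`, and
this isomorphism extends to a continuous strictly monotone bijection onto `[0, 1]`.
-/

open Set unitInterval

section Split

variable {X : Type*} [TopologicalSpace X]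

theorem isPreconnected_of_isClosed_of_isOpen_diff_singleton [PreconnectedSpace X] {F : Set X}
    {x : X} (hF : IsClosed F) (hFx : IsOpen (F \ {x})) : IsPreconnected F := by
  by_cases hxF : x ∈ F
  · refine isPreconnected_iff_subset_of_disjoint.mpr fun u v hu hv hFuv hFuv' => ?_
    wlog hxu : x ∈ u generalizing u v
    · exact (this v u hv hu (by rwa [union_comm]) (by rwa [inter_comm v u])
        ((hFuv hxF).resolve_left hxu)).symm
    have huv : ∀ y ∈ F, y ∈ u → y ∉ v := fun y hyF hyu hyv =>
      (eq_empty_iff_forall_notMem.mp hFuv') y ⟨hyF, hyu, hyv⟩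
    have hFv_closed : F ∩ v = F \ u := by
      ext y
      have := @hFuv y
      have := huv y
      simp only [mem_inter_iff, mem_sdiff, mem_union] at *
      tauto
    have hFv_open : F ∩ v = (F \ {x}) ∩ v := by
      ext y
      refine ⟨fun hy => ⟨⟨hy.1, ?_⟩, hy.2⟩, fun hy => ⟨hy.1.1, hy.2⟩⟩
      rintro (rfl : y = x)
      exact huv y hy.1 hxu hy.2
    rcases isClopen_iff.mp ⟨hFv_closed ▸ hF.inter hu.isClosed_compl, hFv_open ▸ hFx.inter hv⟩
      with h | h
    · exact .inl fun y hy => (hFuv hy).resolve_right fun hyv => h.subset ⟨hy, hyv⟩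
    · exact (huv x hxF hxu (h.symm.subset (mem_univ x)).2).elim
  · rw [sdiff_singleton_eq_self hxF] at hFx
    rcases isClopen_iff.mp ⟨hF, hFx⟩ with rfl | rfl
    exacts [isPreconnected_empty, isPreconnected_univ]

structure IsSplitAt (x : X) (U V : Set X) : Prop where
  isOpen_left : IsOpen U
  isOpen_right : IsOpen V
  disjoint : Disjoint U V
  union_eq : U ∪ V = {x}ᶜ

theorem isSplitAt_empty_left [T1Space X] (x : X) : IsSplitAt x ∅ {x}ᶜ :=
  ⟨isOpen_empty, isOpen_compl_singleton, empty_disjoint _, empty_union _⟩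

namespace IsSplitAt

variable {x : X} {U V : Set X}

theorem symm (h : IsSplitAt x U V) : IsSplitAt x V U :=
  ⟨h.isOpen_right, h.isOpen_left, h.disjoint.symm, union_comm V U ▸ h.union_eq⟩

theorem mem_or_mem {y : X} (h : IsSplitAt x U V) (hy : y ≠ x) : y ∈ U ∨ y ∈ V := by
  rw [← mem_union, h.union_eq]
  exact hy

theorem notMem_left (h : IsSplitAt x U V) : x ∉ U :=
  fun hx => (h.union_eq ▸ mem_union_left V hx : x ∈ ({x}ᶜ : Set X)) rfl

theorem compl_left (h : IsSplitAt x U V) : Uᶜ = insert x V := by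
  ext y
  rcases eq_or_ne y x with rfl | hy
  · simp [h.notMem_left]
  · have := h.mem_or_mem hy
    have := h.disjoint.notMem_of_mem_left (a := y)
    simp only [mem_compl_iff, mem_insert_iff, hy, false_or]
    tauto

theorem isPreconnected_compl_left [PreconnectedSpace X] (h : IsSplitAt x U V) :
    IsPreconnected Uᶜ :=
  isPreconnected_of_isClosed_of_isOpen_diff_singleton (x := x) h.isOpen_left.isClosed_compl
    (by rw [h.compl_left, insert_sdiff_self_of_notMem h.symm.notMem_left]; exact h.isOpen_right)

theorem compl_left_subset_right [PreconnectedSpace X] {o y : X} {U' V' : Set X}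
    (h : IsSplitAt x U V) (h' : IsSplitAt y U' V') (hy : y ∈ V) (hoU : o ∈ U) (hoU' : o ∈ U') :
    U'ᶜ ⊆ V := by
  have hVU' : Vᶜ ⊆ U' := h.symm.isPreconnected_compl_left.subset_left_of_subset_union
    h'.isOpen_left h'.isOpen_right h'.disjoint
    (h'.union_eq ▸ fun z hz (hzy : z = y) => hz (hzy ▸ hy))
    ⟨o, h.disjoint.notMem_of_mem_left hoU, hoU'⟩
  exact compl_subset_comm.mp hVU'

end IsSplitAt

theorem exists_isSplitAt_of_not_isPreconnected [T1Space X] {x o : X}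
    (h : ¬IsPreconnected ({x}ᶜ : Set X)) (ho : o ≠ x) :
    ∃ U V : Set X, IsSplitAt x U V ∧ o ∈ U ∧ V.Nonempty := by
  simp only [isPreconnected_iff_subset_of_disjoint, not_forall, not_or] at h
  obtain ⟨u, v, hu, hv, hcover, hdisj, hnu, hnv⟩ := h
  have hsplit : IsSplitAt x ({x}ᶜ ∩ u) ({x}ᶜ ∩ v) := by
    refine ⟨isOpen_compl_singleton.inter hu, isOpen_compl_singleton.inter hv, ?_, ?_⟩
    · rw [disjoint_iff_inter_eq_empty, inter_inter_inter_comm, inter_self, hdisj]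
    · rw [← inter_union_distrib_left, inter_eq_left.mpr hcover]
  obtain ⟨y, hyx, hyu⟩ := not_subset.mp hnu
  obtain ⟨z, hzx, hzv⟩ := not_subset.mp hnv
  rcases hcover ho with hou | hov
  · exact ⟨_, _, hsplit, ⟨ho, hou⟩, y, hyx, (hcover hyx).resolve_left hyu⟩
  · exact ⟨_, _, hsplit.symm, ⟨ho, hov⟩, z, hzx, (hcover hzx).resolve_right hzv⟩

theorem exists_forall_mem_subset_of_isClosed_nested [CompactSpace X] {V : Set X}
    (hV : V.Nonempty) (K : X → Set X) (hK_closed : ∀ y ∈ V, IsClosed (K y))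
    (hK_self : ∀ y ∈ V, y ∈ K y) (hK_sub : ∀ y ∈ V, K y ⊆ V)
    (hK_mono : ∀ y ∈ V, ∀ z ∈ K y, K z ⊆ K y) : ∃ y ∈ V, ∀ z ∈ K y, K y ⊆ K z := by
  have hchain : ∀ c ⊆ K '' V, IsChain (· ⊆ ·) c → c.Nonempty → ∃ L ∈ K '' V, ∀ L' ∈ c, L ⊆ L' := by
    rintro c hcK hchain ⟨L, hL⟩
    have hclosed : ∀ L ∈ c, IsClosed L := fun L hL => by
      obtain ⟨y, hy, rfl⟩ := hcK hL
      exact hK_closed y hy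
    have : Nonempty c := ⟨⟨L, hL⟩⟩
    obtain ⟨z, hz⟩ := IsCompact.nonempty_sInter_of_directed_nonempty_isCompact_isClosed
      (fun L hL L' hL' => (hchain.total hL hL').elim (fun h => ⟨L, hL, le_rfl, h⟩)
        fun h => ⟨L', hL', h, le_rfl⟩)
      (fun L hL => by obtain ⟨y, hy, rfl⟩ := hcK hL; exact ⟨y, hK_self y hy⟩)
      (fun L hL => (hclosed L hL).isCompact) hclosed
    obtain ⟨y, hy, rfl⟩ := hcK hL
    refine ⟨K z, ⟨z, hK_sub y hy (hz _ hL), rfl⟩, fun L' hL' => ?_⟩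
    obtain ⟨y', hy', rfl⟩ := hcK hL'
    exact hK_mono y' hy' z (hz _ hL')
  obtain ⟨y₀, hy₀⟩ := hV
  obtain ⟨-, -, ⟨y, hy, rfl⟩, hmin⟩ := zorn_superset_nonempty _ hchain _ ⟨y₀, hy₀, rfl⟩
  exact ⟨y, hy, fun z hz => hmin ⟨z, hK_sub y hy hz, rfl⟩ (hK_mono y hy z hz)⟩

theorem IsSplitAt.exists_isPreconnected_compl_singleton [T1Space X] [CompactSpace X]
    [PreconnectedSpace X] {x : X} {U V : Set X} (h : IsSplitAt x U V) (hU : U.Nonempty)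
    (hV : V.Nonempty) : ∃ y ∈ V, IsPreconnected ({y}ᶜ : Set X) := by
  obtain ⟨o, hoU⟩ := hU
  by_contra! hcut
  have hsplit (y : X) (hy : y ∈ V) : ∃ P Q : Set X, IsSplitAt y P Q ∧ o ∈ P ∧ Q.Nonempty :=
    exists_isSplitAt_of_not_isPreconnected (hcut y hy)
      fun hoy => h.disjoint.notMem_of_mem_left hoU (hoy ▸ hy)
  choose! P Q hPQ hoP hQ using hsplit
  have hK_sub (y : X) (hy : y ∈ V) : (P y)ᶜ ⊆ V :=
    h.compl_left_subset_right (hPQ y hy) hy hoU (hoP y hy)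
  have hQ_sub (y : X) (hy : y ∈ V) : Q y ⊆ V :=
    (hPQ y hy).disjoint.subset_compl_left.trans (hK_sub y hy)
  have hK_nest (y : X) (hy : y ∈ V) (z : X) (hz : z ∈ Q y) : (P z)ᶜ ⊆ Q y :=
    (hPQ y hy).compl_left_subset_right (hPQ z (hQ_sub y hy hz)) hz (hoP y hy)
      (hoP z (hQ_sub y hy hz))
  have hK_mono (y : X) (hy : y ∈ V) (z : X) (hz : z ∈ (P y)ᶜ) : (P z)ᶜ ⊆ (P y)ᶜ := by
    rw [(hPQ y hy).compl_left] at hz ⊢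
    rcases hz with rfl | hz
    · exact (hPQ z hy).compl_left.subset
    · exact (hK_nest y hy z hz).trans (subset_insert _ _)
  obtain ⟨y, hy, hmin⟩ := exists_forall_mem_subset_of_isClosed_nested hV (fun y => (P y)ᶜ)
    (fun y hy => (hPQ y hy).isOpen_left.isClosed_compl) (fun y hy => (hPQ y hy).notMem_left)
    hK_sub hK_mono
  obtain ⟨z, hz⟩ := hQ y hy
  exact (hPQ y hy).symm.notMem_left
    (hK_nest y hy z hz (hmin z ((hPQ y hy).disjoint.subset_compl_left hz) (hPQ y hy).notMem_left))

theorem exists_isSplitAt_of_isPreconnected_compl_imp [T1Space X] [CompactSpace X]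
    [PreconnectedSpace X] {a b : X}
    (hcut : ∀ x : X, IsPreconnected ({x}ᶜ : Set X) → x = a ∨ x = b) (x : X) :
    ∃ U V : Set X, IsSplitAt x U V ∧ a ∉ V ∧ b ∉ U := by
  by_cases hxa : x = a
  · exact ⟨∅, {x}ᶜ, isSplitAt_empty_left x, fun h => h hxa.symm, notMem_empty b⟩
  by_cases hxb : x = b
  · exact ⟨{x}ᶜ, ∅, (isSplitAt_empty_left x).symm, notMem_empty a, fun h => h hxb.symm⟩
  obtain ⟨U, V, h, haU, hV⟩ := exists_isSplitAt_of_not_isPreconnected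
    (fun hx => (hcut x hx).elim hxa hxb) (Ne.symm hxa)
  obtain ⟨y, hyV, hy⟩ := h.exists_isPreconnected_compl_singleton ⟨a, haU⟩ hV
  have haV : a ∉ V := h.disjoint.notMem_of_mem_left haU
  have hbV : b ∈ V := (hcut y hy).elim (fun hya => (haV (hya ▸ hyV)).elim) (· ▸ hyV)
  exact ⟨U, V, h, haV, h.disjoint.notMem_of_mem_right hbV⟩

end Split

section

variable {X : Type*} [TopologicalSpace X] {a b : X}

/-- A split at every point with `a` on the left and `b` on the right. The conditions read
`a ∉ right x`, `b ∉ left x` so that they also cover the endpoints `x = a` and `x = b`. -/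
structure SplitSystem (a b : X) where
  left : X → Set X
  right : X → Set X
  isSplitAt : ∀ x, IsSplitAt x (left x) (right x)
  notMem_right : ∀ x, a ∉ right x
  notMem_left : ∀ x, b ∉ left x

namespace SplitSystem

variable (s : SplitSystem a b)

def swap : SplitSystem b a :=
  ⟨s.right, s.left, fun x => (s.isSplitAt x).symm, s.notMem_left, s.notMem_right⟩

theorem subset_left {S : Set X} {x : X} (hS : IsPreconnected S) (ha : a ∈ S) (hx : x ∉ S) :
    S ⊆ s.left x := by
  have hsplit := s.isSplitAt x
  refine hS.subset_left_of_subset_union hsplit.isOpen_left hsplit.isOpen_right hsplit.disjoint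
    (hsplit.union_eq ▸ fun y hy (hyx : y = x) => hx (hyx ▸ hy)) ⟨a, ha, ?_⟩
  exact (hsplit.mem_or_mem fun hax => hx (hax ▸ ha)).resolve_right (s.notMem_right x)

variable [PreconnectedSpace X]

theorem notMem_left_of_mem_left {x y : X} (hxy : x ∈ s.left y) : y ∉ s.left x := fun hyx =>
  (s.isSplitAt x).disjoint.notMem_of_mem_left hyx <|
    s.swap.subset_left (s.isSplitAt y).isPreconnected_compl_left (s.notMem_left y)
      (not_not.mpr hxy) (s.isSplitAt y).notMem_left

theorem mem_left_of_mem_right {x y : X} (hy : y ∈ s.right x) : x ∈ s.left y :=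
  s.subset_left (s.isSplitAt x).symm.isPreconnected_compl_left (s.notMem_right x)
    (not_not.mpr hy) (s.isSplitAt x).symm.notMem_left

theorem mem_right_iff_mem_left {x y : X} : y ∈ s.right x ↔ x ∈ s.left y := by
  refine ⟨s.mem_left_of_mem_right, fun hxy => ?_⟩
  refine ((s.isSplitAt x).mem_or_mem ?_).resolve_left (s.notMem_left_of_mem_left hxy)
  rintro rfl
  exact (s.isSplitAt y).notMem_left hxy

theorem mem_left_trans {x y z : X} (hxy : x ∈ s.left y) (hyz : y ∈ s.left z) : x ∈ s.left z :=
  s.subset_left (s.isSplitAt y).symm.isPreconnected_compl_left (s.notMem_right y)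
    (not_not.mpr (s.mem_right_iff_mem_left.mpr hyz))
    ((s.isSplitAt y).disjoint.notMem_of_mem_left hxy)

instance : IsStrictTotalOrder X (fun x y => x ∈ s.left y) where
  irrefl x := (s.isSplitAt x).notMem_left
  trans _ _ _ := s.mem_left_trans
  trichotomous x y hxy hyx := by
    by_contra hne
    exact hyx (s.mem_left_of_mem_right (((s.isSplitAt y).mem_or_mem hne).resolve_left hxy))

end SplitSystem

theorem SplitSystem.exists_linearOrder [PreconnectedSpace X] (s : SplitSystem a b) :
    ∃ _ : LinearOrder X, (∀ x : X, IsOpen (Iio x)) ∧ ∀ x : X, IsOpen (Ioi x) := by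
  classical
  refine ⟨linearOrderOfSTO (fun x y => x ∈ s.left y), fun x => (s.isSplitAt x).isOpen_left,
    fun x => ?_⟩
  convert (s.isSplitAt x).isOpen_right
  ext y
  exact s.mem_right_iff_mem_left.symm

end

section LinearOrder

variable {X : Type*} [TopologicalSpace X] [LinearOrder X]

theorem denselyOrdered_of_isOpen_Iio_Ioi [PreconnectedSpace X] (hIio : ∀ x : X, IsOpen (Iio x))
    (hIoi : ∀ x : X, IsOpen (Ioi x)) : DenselyOrdered X where
  dense x y hxy := by
    by_contra! h
    have hcompl : (Iio y)ᶜ = Ioi x := by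
      ext z; simp only [mem_compl_iff, mem_Iio, not_lt, mem_Ioi]
      exact ⟨hxy.trans_le, fun hxz => not_lt.mp fun hzy => not_lt.mpr (h z hxz) hzy⟩
    rcases isClopen_iff.mp ⟨isOpen_compl_iff.mp (hcompl ▸ hIoi x), hIio y⟩ with h' | h'
    · exact (h' ▸ hxy : x ∈ (∅ : Set X))
    · exact lt_irrefl y (h' ▸ mem_univ y : y ∈ Iio y)

theorem exists_countable_forall_exists_between [TopologicalSpace.SeparableSpace X]
    [DenselyOrdered X] (hIio : ∀ x : X, IsOpen (Iio x)) (hIoi : ∀ x : X, IsOpen (Ioi x)) :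
    ∃ D : Set X, D.Countable ∧ (∀ d ∈ D, ¬IsMin d ∧ ¬IsMax d) ∧
      ∀ x y, x < y → ∃ d ∈ D, x < d ∧ d < y := by
  obtain ⟨D, hDc, hD⟩ := TopologicalSpace.exists_countable_dense X
  refine ⟨D ∩ {d | ¬IsMin d ∧ ¬IsMax d}, hDc.mono inter_subset_left, fun d hd => hd.2,
    fun x y hxy => ?_⟩
  obtain ⟨d, hdD, hxd, hdy⟩ := hD.exists_mem_open ((hIoi x).inter (hIio y)) (exists_between hxy)
  exact ⟨d, ⟨hdD, not_isMin_of_lt hxd, not_isMax_of_lt hdy⟩, hxd, hdy⟩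

/-- The topology of `X` is finer than the order topology, for which Mathlib's
`Monotone.continuous_of_denseRange` applies. -/
theorem Monotone.continuous_of_denseRange_of_isOpen_Iio_Ioi {β : Type*} [LinearOrder β]
    [TopologicalSpace β] [OrderTopology β] [DenselyOrdered β] (hIio : ∀ x : X, IsOpen (Iio x))
    (hIoi : ∀ x : X, IsOpen (Ioi x)) {f : X → β} (hf : Monotone f) (hd : DenseRange f) :
    Continuous f :=
  continuous_le_dom (le_generateFrom <| by rintro _ ⟨x, rfl | rfl⟩; exacts [hIoi x, hIio x])
    (@Monotone.continuous_of_denseRange X β _ (Preorder.topology X)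
      (@OrderTopology.mk X (Preorder.topology X) _ rfl) _ _ _ _ f hf hd)

end LinearOrder

theorem nonempty_orderIso_ratIoo {X : Type*} [LinearOrder X] {D : Set X} (hc : D.Countable)
    (hne : D.Nonempty) (hext : ∀ d ∈ D, ¬IsMin d ∧ ¬IsMax d)
    (hD : ∀ x y, x < y → ∃ d ∈ D, x < d ∧ d < y) :
    Nonempty (D ≃o Ioo (0 : ℚ) 1) := by
  have : Countable D := hc.to_subtype
  have : Nonempty D := hne.to_subtype
  have : DenselyOrdered D := ⟨fun d₁ d₂ h => by
    obtain ⟨d, hd, h₁, h₂⟩ := hD d₁ d₂ h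
    exact ⟨⟨d, hd⟩, h₁, h₂⟩⟩
  have : NoMinOrder D := ⟨fun d => by
    obtain ⟨x, hx⟩ := not_isMin_iff.mp (hext d d.2).1
    obtain ⟨d', hd', -, h⟩ := hD x d hx
    exact ⟨⟨d', hd'⟩, h⟩⟩
  have : NoMaxOrder D := ⟨fun d => by
    obtain ⟨y, hy⟩ := not_isMax_iff.mp (hext d d.2).2
    obtain ⟨d', hd', h, -⟩ := hD d y hy
    exact ⟨⟨d', hd'⟩, h⟩⟩
  have : Nonempty (Ioo (0 : ℚ) 1) := ⟨⟨1 / 2, by norm_num⟩⟩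
  exact Order.iso_of_countable_dense D (Ioo (0 : ℚ) 1)

theorem exists_strictMono_extend {X β : Type*} [LinearOrder X] [CompleteLattice β] {D : Set X}
    (hD : ∀ x y, x < y → ∃ d ∈ D, x < d ∧ d < y) {g : D → β} (hg : StrictMono g) :
    ∃ f : X → β, StrictMono f ∧ ∀ d : D, f d = g d := by
  refine ⟨fun x => ⨆ (d : D) (_ : (d : X) ≤ x), g d, fun x y hxy => ?_, fun d => ?_⟩
  · obtain ⟨d₁, hd₁, hxd₁, hd₁y⟩ := hD x y hxy
    obtain ⟨d₂, hd₂, hd₁d₂, hd₂y⟩ := hD d₁ y hd₁y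
    calc ⨆ (d : D) (_ : (d : X) ≤ x), g d
        ≤ g ⟨d₁, hd₁⟩ := iSup₂_le fun d hdx => (hg (hdx.trans_lt hxd₁ : d < ⟨d₁, hd₁⟩)).le
      _ < g ⟨d₂, hd₂⟩ := hg hd₁d₂
      _ ≤ ⨆ (d : D) (_ : (d : X) ≤ y), g d := le_iSup₂_of_le ⟨d₂, hd₂⟩ hd₂y.le le_rfl
  · exact le_antisymm (iSup₂_le fun d' hd' => hg.monotone hd') (le_iSup₂_of_le d le_rfl le_rfl)

theorem exists_strictMono_denseRange_ratIoo :
    ∃ φ : Ioo (0 : ℚ) 1 → I, StrictMono φ ∧ DenseRange φ := by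
  refine ⟨fun q => ⟨q, by exact_mod_cast q.2.1.le, by exact_mod_cast q.2.2.le⟩,
    fun q r h => Subtype.mk_lt_mk.mpr (by exact_mod_cast h), ?_⟩
  refine dense_iff_exists_between.mpr fun s t hst => ?_
  obtain ⟨q, hsq, hqt⟩ := exists_rat_btwn (show (s : ℝ) < t from hst)
  exact ⟨_, ⟨⟨q, by exact_mod_cast s.2.1.trans_lt hsq, by exact_mod_cast hqt.trans_le t.2.2⟩, rfl⟩,
    hsq, hqt⟩

theorem nonempty_homeomorph_unitInterval_of_isOpen_Iio_Ioi {X : Type*} [TopologicalSpace X]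
    [LinearOrder X] [CompactSpace X] [PreconnectedSpace X] [TopologicalSpace.SeparableSpace X]
    [Nontrivial X] (hIio : ∀ x : X, IsOpen (Iio x)) (hIoi : ∀ x : X, IsOpen (Ioi x)) :
    Nonempty (X ≃ₜ I) := by
  have := denselyOrdered_of_isOpen_Iio_Ioi hIio hIoi
  obtain ⟨D, hDc, hext, hD⟩ := exists_countable_forall_exists_between hIio hIoi
  obtain ⟨x, y, hxy⟩ := exists_pair_lt X
  obtain ⟨d, hd, -⟩ := hD x y hxy
  obtain ⟨e⟩ := nonempty_orderIso_ratIoo hDc ⟨d, hd⟩ hext hD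
  obtain ⟨φ, hφ, hφ_dense⟩ := exists_strictMono_denseRange_ratIoo
  obtain ⟨f, hf, hfD⟩ := exists_strictMono_extend hD (hφ.comp e.strictMono)
  have hf_dense : DenseRange f :=
    hφ_dense.mono (by rintro _ ⟨q, rfl⟩; exact ⟨e.symm q, by simp [hfD]⟩)
  have hf_cont : Continuous f :=
    hf.monotone.continuous_of_denseRange_of_isOpen_Iio_Ioi hIio hIoi hf_dense
  have hf_surj : Function.Surjective f := by
    rw [← range_eq_univ, ← (isCompact_range hf_cont).isClosed.closure_eq, hf_dense.closure_range]
  exact ⟨hf_cont.homeoOfEquivCompactToT2 (f := .ofBijective f ⟨hf.injective, hf_surj⟩)⟩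

theorem stmt_5_general (X : Type*) [TopologicalSpace X] [CompactSpace X]
    [ConnectedSpace X] [TopologicalSpace.MetrizableSpace X]
    (a b : X) (hab : a ≠ b)
    (htwo : ∀ x : X, IsPreconnected ({x}ᶜ : Set X) ↔ (x = a ∨ x = b)) :
    Nonempty (X ≃ₜ unitInterval) := by
  choose U V hsplit haV hbU using
    exists_isSplitAt_of_isPreconnected_compl_imp (a := a) (b := b) fun x => (htwo x).mp
  obtain ⟨_, hIio, hIoi⟩ := SplitSystem.exists_linearOrder ⟨U, V, hsplit, haV, hbU⟩
  have : Nontrivial X := ⟨a, b, hab⟩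
  let := TopologicalSpace.metrizableSpaceMetric X
  exact nonempty_homeomorph_unitInterval_of_isOpen_Iio_Ioi hIio hIoi

/-- Any two arcs are homeomorphic: any metrizable continuum with exactly two
non-separating points is homeomorphic to the closed unit interval. -/
theorem stmt_5 (X : Type*) [TopologicalSpace X] [CompactSpace X] [T2Space X]
    [ConnectedSpace X] [TopologicalSpace.MetrizableSpace X]
    (a b : X) (hab : a ≠ b)
    (htwo : ∀ x : X, IsPreconnected ({x}ᶜ : Set X) ↔ (x = a ∨ x = b)) :
    Nonempty (X ≃ₜ unitInterval) :=
  stmt_5_general X a b hab htwo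
end

section
/- Let f : X → Y be a continuous surjection between compact Hausdorff spaces with the property that for every subcontinuum K of Y there exists a subcontinuum C of X with f(C) = K and f⁻¹(V) ⊆ C for every open V ⊆ Y with V ⊆ K. If Y is locally connected, then f is strongly monotone: the preimage of every subcontinuum of Y is connected. -/
/-!
Let `U` range over the open connected neighbourhoods of `K` and let `C U` be a lift of
`closure U`. Then `f ⁻¹' K ⊆ f ⁻¹' U ⊆ C U ⊆ f ⁻¹' closure U`. Local connectedness and
normality of `Y` make the sets `closure U` shrink to `K` in a directed way, so the continua
`C U` form a directed family whose intersection is `f ⁻¹' K`; such an intersection of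
continua is connected.
-/

open Set

section

variable {X Y : Type*} [TopologicalSpace X] [TopologicalSpace Y]

theorem IsPreconnected.iInter_of_directed_of_isCompact [T2Space X] {ι : Type*} [Nonempty ι]
    {C : ι → Set X} (hdir : Directed (· ⊇ ·) C) (hcpt : ∀ i, IsCompact (C i))
    (hconn : ∀ i, IsPreconnected (C i)) : IsPreconnected (⋂ i, C i) := by
  rw [isPreconnected_closed_iff]
  rintro t₁ t₂ ht₁ ht₂ hcover ⟨a, haS, ha₁⟩ ⟨b, hbS, hb₂⟩
  by_contra hdisj
  have hS : IsCompact (⋂ i, C i) := (hcpt (Classical.arbitrary ι)).of_isClosed_subset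
    (isClosed_iInter fun i => (hcpt i).isClosed) (iInter_subset _ _)
  have hdisj' : Disjoint ((⋂ i, C i) ∩ t₁) ((⋂ i, C i) ∩ t₂) :=
    disjoint_left.2 fun x ⟨hx, h₁⟩ ⟨_, h₂⟩ => hdisj ⟨x, hx, h₁, h₂⟩
  obtain ⟨U, V, hU, hV, hSU, hSV, hUV⟩ :=
    SeparatedNhds.of_isCompact_isCompact (hS.inter_right ht₁) (hS.inter_right ht₂) hdisj'
  obtain ⟨i, hi⟩ : ∃ i, C i ⊆ U ∪ V := by
    refine exists_subset_nhds_of_isCompact hdir hcpt fun x hx => (hU.union hV).mem_nhds ?_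
    rcases hcover hx with h | h
    exacts [Or.inl (hSU ⟨hx, h⟩), Or.inr (hSV ⟨hx, h⟩)]
  obtain ⟨x, -, hxU, hxV⟩ := hconn i U V hU hV hi
    ⟨a, mem_iInter.1 haS i, hSU ⟨haS, ha₁⟩⟩ ⟨b, mem_iInter.1 hbS i, hSV ⟨hbS, hb₂⟩⟩
  exact hUV.le_bot ⟨hxU, hxV⟩

theorem IsConnected.iInter_of_directed_of_isCompact [T2Space X] {ι : Type*} [Nonempty ι]
    {C : ι → Set X} (hdir : Directed (· ⊇ ·) C) (hcpt : ∀ i, IsCompact (C i))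
    (hconn : ∀ i, IsConnected (C i)) : IsConnected (⋂ i, C i) :=
  ⟨IsCompact.nonempty_iInter_of_directed_nonempty_isCompact_isClosed C hdir
      (fun i => (hconn i).nonempty) hcpt fun i => (hcpt i).isClosed,
    IsPreconnected.iInter_of_directed_of_isCompact hdir hcpt fun i => (hconn i).isPreconnected⟩

theorem IsConnected.exists_isOpen_isConnected_closure_subset [NormalSpace Y]
    [LocallyConnectedSpace Y] {K W : Set Y} (hK : IsConnected K) (hKcl : IsClosed K)
    (hW : IsOpen W) (hKW : K ⊆ W) :
    ∃ U, IsOpen U ∧ IsConnected U ∧ K ⊆ U ∧ closure U ⊆ W := by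
  obtain ⟨W', hW', hKW', hW'W⟩ := normal_exists_closure_subset hKcl hW hKW
  obtain ⟨y, hy⟩ := hK.nonempty
  exact ⟨connectedComponentIn W' y, hW'.connectedComponentIn,
    isConnected_connectedComponentIn_iff.2 (hKW' hy),
    hK.isPreconnected.subset_connectedComponentIn hy hKW',
    (closure_mono (connectedComponentIn_subset W' y)).trans hW'W⟩

theorem isConnected_preimage_of_directed_lifts [T2Space X] {f : X → Y} {K : Set Y}
    {ι : Type*} [Nonempty ι] {U : ι → Set Y} {C : ι → Set X} (hKU : ∀ i, K ⊆ U i)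
    (hUK : ⋂ i, closure (U i) ⊆ K) (hUdir : ∀ i j, ∃ k, closure (U k) ⊆ U i ∩ U j)
    (hCcpt : ∀ i, IsCompact (C i)) (hCconn : ∀ i, IsConnected (C i))
    (hCimage : ∀ i, f '' C i ⊆ closure (U i)) (hCpreimage : ∀ i, f ⁻¹' U i ⊆ C i) :
    IsConnected (f ⁻¹' K) := by
  have hCsub : ∀ i, C i ⊆ f ⁻¹' closure (U i) := fun i => image_subset_iff.1 (hCimage i)
  have hdir : Directed (· ⊇ ·) C := fun i j => by
    obtain ⟨k, hk⟩ := hUdir i j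
    have hCk : C k ⊆ f ⁻¹' (U i ∩ U j) := (hCsub k).trans (preimage_mono hk)
    exact ⟨k, hCk.trans ((preimage_mono inter_subset_left).trans (hCpreimage i)),
      hCk.trans ((preimage_mono inter_subset_right).trans (hCpreimage j))⟩
  have hinter : ⋂ i, C i = f ⁻¹' K := by
    refine Subset.antisymm ?_ (subset_iInter fun i => (preimage_mono (hKU i)).trans (hCpreimage i))
    calc ⋂ i, C i ⊆ ⋂ i, f ⁻¹' closure (U i) := iInter_mono hCsub
      _ = f ⁻¹' ⋂ i, closure (U i) := preimage_iInter.symm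
      _ ⊆ f ⁻¹' K := preimage_mono hUK
  exact hinter ▸ IsConnected.iInter_of_directed_of_isCompact hdir hCcpt hCconn

end

theorem stmt_8_general (X Y : Type*) [TopologicalSpace X] [CompactSpace X] [T2Space X]
    [TopologicalSpace Y] [CompactSpace Y] [T2Space Y] [LocallyConnectedSpace Y]
    (f : X → Y)
    (hlift : ∀ K : Set Y, IsClosed K → IsConnected K →
      ∃ C : Set X, IsClosed C ∧ IsConnected C ∧ f '' C = K ∧
        ∀ V : Set Y, IsOpen V → V ⊆ K → f ⁻¹' V ⊆ C) :
    ∀ K : Set Y, IsClosed K → IsConnected K → IsConnected (f ⁻¹' K) := by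
  intro K hKcl hKconn
  let ι := {U : Set Y // IsOpen U ∧ IsConnected U ∧ K ⊆ U}
  have hnhds : ∀ W, IsOpen W → K ⊆ W → ∃ U : ι, closure U.1 ⊆ W := fun W hW hKW => by
    obtain ⟨U, hU, hUconn, hKU, hUW⟩ :=
      hKconn.exists_isOpen_isConnected_closure_subset hKcl hW hKW
    exact ⟨⟨U, hU, hUconn, hKU⟩, hUW⟩
  have : Nonempty ι := ⟨(hnhds univ isOpen_univ (subset_univ K)).choose⟩
  choose C hCcl hCconn hCimage hCpreimage using
    fun U : ι => hlift (closure U.1) isClosed_closure U.2.2.1.closure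
  refine isConnected_preimage_of_directed_lifts (U := fun U : ι => U.1) (fun U => U.2.2.2) ?_
    (fun U₁ U₂ => hnhds _ (U₁.2.1.inter U₂.2.1) (subset_inter U₁.2.2.2 U₂.2.2.2))
    (fun U => (hCcl U).isCompact) hCconn (fun U => (hCimage U).subset)
    (fun U => hCpreimage U U.1 U.2.1 subset_closure)
  intro y hy
  by_contra hyK
  obtain ⟨U, hU⟩ := hnhds {y}ᶜ isOpen_compl_singleton (subset_compl_singleton_iff.2 hyK)
  exact hU (mem_iInter.1 hy U) rfl

/-- Let `f : X → Y` be a continuous surjection of compact Hausdorff spaces such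
that every subcontinuum `K` of `Y` lifts to a subcontinuum `C` of `X` with
`f '' C = K` and `f ⁻¹' V ⊆ C` for every open `V ⊆ K`.  If `Y` is locally
connected, then `f` is strongly monotone. -/
theorem stmt_8 (X Y : Type*) [TopologicalSpace X] [CompactSpace X] [T2Space X]
    [TopologicalSpace Y] [CompactSpace Y] [T2Space Y] [LocallyConnectedSpace Y]
    (f : X → Y) (hf : Continuous f) (hsurj : Function.Surjective f)
    (hlift : ∀ K : Set Y, IsClosed K → IsConnected K →
      ∃ C : Set X, IsClosed C ∧ IsConnected C ∧ f '' C = K ∧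
        ∀ V : Set Y, IsOpen V → V ⊆ K → f ⁻¹' V ⊆ C) :
    ∀ K : Set Y, IsClosed K → IsConnected K → IsConnected (f ⁻¹' K) :=
  stmt_8_general X Y f hlift
end

section
/- Let f : [0,1] → [0,1] be a monotone order-preserving continuous surjection, λ(y) = inf f⁻¹({y}), ρ(y) = sup f⁻¹({y}), and let L be dense in [0,1]. Then for any nondegenerate open interval U of [0,1] that contains some fiber f⁻¹({y}), the intersection U ∩ λ(L) is infinite. -/
open unitInterval

lemma aux_dense_inf {L V : Set unitInterval} (hL : Dense L) (hV : IsOpen V)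
    (hne : V.Nonempty) : (L ∩ V).Infinite := by
  intro hfin
  have hd : Dense (L \ (L ∩ V)) := hL.diff_finite hfin
  obtain ⟨x, hxV, hxL⟩ := hd.inter_open_nonempty V hV hne
  exact hxL.2 ⟨hxL.1, hxV⟩

/-- Let `f : [0,1] → [0,1]` be a monotone order-preserving continuous
surjection, `lam y = inf f⁻¹({y})`, and let `L` be dense in `[0,1]`.  Then any
nondegenerate open interval `U` containing some fiber of `f` meets `lam '' L`
in an infinite set. -/
theorem stmt_17 (f : unitInterval → unitInterval) (hf : Continuous f)
    (hsurj : Function.Surjective f) (hm : Monotone f)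
    (hmono : ∀ y : unitInterval, IsConnected (f ⁻¹' {y}))
    (lam : unitInterval → unitInterval)
    (hlam : ∀ y, IsLeast (f ⁻¹' {y}) (lam y))
    (L : Set unitInterval) (hL : Dense L)
    (U : Set unitInterval) (hUopen : IsOpen U) (hUoc : U.OrdConnected)
    (hUnd : ∃ u ∈ U, ∃ v ∈ U, u ≠ v)
    (hfib : ∃ y : unitInterval, f ⁻¹' {y} ⊆ U) :
    (U ∩ lam '' L).Infinite := by
  obtain ⟨y, hfibU⟩ := hfib
  have hfl : ∀ z, f (lam z) = z := fun z => (hlam z).1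
  have hlaminj : Function.Injective lam := fun a b h => by
    rw [← hfl a, ← hfl b, h]
  have hlamyU : lam y ∈ U := hfibU (hlam y).1
  -- find c ∈ U with f c ≠ y
  have hc : ∃ c ∈ U, f c ≠ y := by
    by_contra h
    push_neg at h
    have hUeq : U = f ⁻¹' {y} := Set.Subset.antisymm (fun c hc => h c hc) hfibU
    have hclopen : IsClopen U := ⟨hUeq ▸ (isClosed_singleton.preimage hf), hUopen⟩
    have hUuniv : U = Set.univ := hclopen.eq_univ ⟨lam y, hlamyU⟩
    -- f is constant y, contradicting surjectivity
    have hy0 : f ⁻¹' {y} = Set.univ := by rw [← hUeq, hUuniv]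
    obtain ⟨x, hx⟩ := hsurj (if y = 0 then 1 else 0)
    have : f x = y := by
      have : x ∈ f ⁻¹' {y} := hy0 ▸ Set.mem_univ x
      exact this
    rw [this] at hx
    have h01 : (0 : unitInterval) ≠ 1 := by
      simp [Subtype.ext_iff]
    split_ifs at hx with hy
    · exact h01 (hy.symm.trans hx)
    · exact hy hx
  obtain ⟨c, hcU, hcfy⟩ := hc
  rcases lt_or_gt_of_ne hcfy with hlt | hgt
  · -- f c < y
    have hcly : c < lam y := by
      by_contra h'
      push_neg at h'
      exact absurd (hfl y ▸ hm h') (not_le_of_gt hlt)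
    -- infinitely many ℓ ∈ L ∩ Ioo (f c) y
    have hS : (L ∩ Set.Ioo (f c) y).Infinite :=
      aux_dense_inf hL isOpen_Ioo (Set.nonempty_Ioo.mpr hlt)
    have hsub : lam '' (L ∩ Set.Ioo (f c) y) ⊆ U ∩ lam '' L := by
      rintro _ ⟨ℓ, ⟨hℓL, hℓ1, hℓ2⟩, rfl⟩
      refine ⟨?_, ℓ, hℓL, rfl⟩
      have h1 : lam ℓ ≤ lam y := by
        by_contra h'
        push_neg at h'
        exact absurd (hfl ℓ ▸ hfl y ▸ hm h'.le) (not_le_of_gt hℓ2)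
      have h2 : c ≤ lam ℓ := by
        by_contra h'
        push_neg at h'
        exact absurd (hfl ℓ ▸ hm h'.le) (not_le_of_gt hℓ1)
      exact hUoc.out hcU hlamyU ⟨h2, h1⟩
    exact (hS.image (hlaminj.injOn)).mono hsub
  · -- y < f c
    have hcly : lam y < c := by
      by_contra h'
      push_neg at h'
      exact absurd (hfl y ▸ hm h') (not_le_of_gt hgt)
    have hS : (L ∩ Set.Ioo y (f c)).Infinite :=
      aux_dense_inf hL isOpen_Ioo (Set.nonempty_Ioo.mpr hgt)
    have hsub : lam '' (L ∩ Set.Ioo y (f c)) ⊆ U ∩ lam '' L := by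
      rintro _ ⟨ℓ, ⟨hℓL, hℓ1, hℓ2⟩, rfl⟩
      refine ⟨?_, ℓ, hℓL, rfl⟩
      have h1 : lam ℓ ≤ c := by
        by_contra h'
        push_neg at h'
        exact absurd (hfl ℓ ▸ hm h'.le) (not_le_of_gt hℓ2)
      have h2 : lam y ≤ lam ℓ := by
        by_contra h'
        push_neg at h'
        exact absurd (hfl ℓ ▸ hfl y ▸ hm h'.le) (not_le_of_gt hℓ1)
      exact hUoc.out hlamyU hcU ⟨h2, h1⟩
    exact (hS.image (hlaminj.injOn)).mono hsub
end
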